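/- For every integer 0 ≤ r ≤ n, it holds that C(n,r)·(q̂_mg−1)^r ≤ s_r ≤ C(n,r)·(q̂_a−1)^r, where C(n,r) is the binomial coefficient, q̂_a = (1/n)∑_{i=1}^n q_i, and q̂_mg − 1 = (∏_{i=1}^n (q_i−1))^{1/n} is the geometric mean of the numbers q_i − 1. -/

import Mathlib

/-- The Hamming weight of `x ∈ Q = ∏ i, ℤ/q_iℤ`: the number of coordinates `i`
with `x i ≠ 0`. -/
def mwt {n : ℕ} {q : Fin n → ℕ} (x : ∀ i, ZMod (q i)) : ℕ :=
  (Finset.univ.filter (fun i => x i ≠ 0)).card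

/-- `sph q r` is `s_r`, the number of `x ∈ Q` with `wt(x) = r`. -/
noncomputable def sph {n : ℕ} (q : Fin n → ℕ) (r : ℕ) : ℕ :=
  Nat.card {x : ∀ i, ZMod (q i) // mwt x = r}

/-- `sphI q r I` is `s_r(I)`, the number of `x ∈ Q` with `wt(x) = r` and
`supp(x) ⊆ I`. -/
noncomputable def sphI {n : ℕ} (q : Fin n → ℕ) (r : ℕ) (I : Finset (Fin n)) : ℕ :=
  Nat.card {x : ∀ i, ZMod (q i) // mwt x = r ∧ ∀ i, x i ≠ 0 → i ∈ I}

/-!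
Sorting the words by their support shows that `s_r = e_r(q₁ - 1, …, q_n - 1)`, the `r`-th
elementary symmetric polynomial of the numbers `q_i - 1`. The lower bound is AM-GM applied to the
`C(n, r)` monomials of `e_r`, whose product is `(∏ (q_i - 1)) ^ C(n - 1, r - 1)`. The upper bound
is Maclaurin's inequality `e_r ≤ C(n, r) (e_1 / n) ^ r`, proved by induction on the number of
variables; the inductive step is AM-GM for `r` copies of the old mean and the new variable.
-/

open Finset

section Counting

variable {ι : Type*} [Fintype ι] [DecidableEq ι] {β : ι → Type*} [∀ i, Zero (β i)]
  [∀ i, DecidableEq (β i)] [∀ i, Fintype (β i)]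

theorem card_filter_support_eq (I : Finset ι) :
    #{x : ∀ i, β i | ({i | x i ≠ 0} : Finset ι) = I} = ∏ i ∈ I, (Fintype.card (β i) - 1) := by
  have hpi : ({x : ∀ i, β i | ({i | x i ≠ 0} : Finset ι) = I} : Finset _) =
      Fintype.piFinset fun i => if i ∈ I then ({a | a ≠ 0} : Finset (β i)) else {0} := by
    ext x
    simp only [mem_filter, mem_univ, true_and, Fintype.mem_piFinset, Finset.ext_iff]
    refine forall_congr' fun i => ?_
    split_ifs with hi <;> simp [hi]
  simp_rw [hpi, Fintype.card_piFinset, apply_ite card, card_singleton, prod_ite_mem, univ_inter,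
    filter_ne', card_erase_of_mem (mem_univ _), card_univ]

theorem card_filter_hammingNorm_eq (r : ℕ) :
    #{x : ∀ i, β i | hammingNorm x = r} =
      ∑ I ∈ univ.powersetCard r, ∏ i ∈ I, (Fintype.card (β i) - 1) := by
  rw [card_eq_sum_card_fiberwise (f := fun x : ∀ i, β i => ({i | x i ≠ 0} : Finset ι))
    (t := univ.powersetCard r) (fun x hx => by simpa [hammingNorm] using hx)]
  refine sum_congr rfl fun I hI => ?_
  rw [← card_filter_support_eq, filter_filter]
  congr 1
  refine filter_congr fun x _ => and_iff_right_of_imp fun hx => ?_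
  rw [hammingNorm, hx, (mem_powersetCard.1 hI).2]

end Counting

theorem sph_eq_sum_prod {n : ℕ} (q : Fin n → ℕ) [∀ i, NeZero (q i)] (r : ℕ) :
    sph q r = ∑ I ∈ univ.powersetCard r, ∏ i ∈ I, (q i - 1) := by
  rw [sph, Nat.card_eq_fintype_card, Fintype.card_subtype]
  have h := card_filter_hammingNorm_eq (β := fun i => ZMod (q i)) r
  simp only [ZMod.card] at h
  exact h

theorem pow_mul_le_mean_pow {x y : ℝ} (hx : 0 ≤ x) (hy : 0 ≤ y) (r : ℕ) :
    x ^ r * y ≤ ((r * x + y) / (r + 1)) ^ (r + 1) := by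
  have hr : (0 : ℝ) < r + 1 := by positivity
  have amgm := Real.geom_mean_le_arith_mean2_weighted (w₁ := r / (r + 1)) (w₂ := 1 / (r + 1))
    (by positivity) (by positivity) hx hy (by field_simp)
  calc x ^ r * y = (x ^ (r / (r + 1) : ℝ) * y ^ (1 / (r + 1) : ℝ)) ^ (r + 1) := by
        rw [mul_pow, ← Real.rpow_mul_natCast hx, ← Real.rpow_mul_natCast hy]
        push_cast
        rw [div_mul_cancel₀ _ hr.ne', one_div_mul_cancel hr.ne', Real.rpow_one, Real.rpow_natCast]
    _ ≤ ((r * x + y) / (r + 1)) ^ (r + 1) := by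
        gcongr
        exact amgm.trans_eq (by ring)

theorem choose_mul_pow_add_le {m a : ℝ} (hm : 0 ≤ m) (ha : 0 ≤ a) (k r : ℕ) :
    k.choose (r + 1) * m ^ (r + 1) + k.choose r * m ^ r * a ≤
      (k + 1).choose (r + 1) * ((k * m + a) / (k + 1)) ^ (r + 1) := by
  rcases lt_or_ge k r with hkr | hrk
  · rw [Nat.choose_eq_zero_of_lt hkr, Nat.choose_eq_zero_of_lt (by omega)]
    simp only [Nat.cast_zero, zero_mul, add_zero]
    positivity
  have hk : (0 : ℝ) < k + 1 := by positivity
  have hrk' : (r : ℝ) ≤ k := by exact_mod_cast hrk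
  have h₁ : (k.choose (r + 1) : ℝ) * (k + 1) = (k + 1).choose (r + 1) * (k - r) := by
    have := Nat.choose_mul_succ_eq k (r + 1)
    rw [show k + 1 - (r + 1) = k - r by omega] at this
    rw [← Nat.cast_sub hrk]
    exact_mod_cast this
  have h₂ : ((k : ℝ) + 1) * k.choose r = (k + 1).choose (r + 1) * (r + 1) := by
    exact_mod_cast Nat.add_one_mul_choose_eq k r
  set b := ((k - r) * m + (r + 1) * a) / (k + 1) with hb_def
  have hb : 0 ≤ b :=
    div_nonneg (add_nonneg (mul_nonneg (sub_nonneg.2 hrk') hm) (by positivity)) hk.le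
  calc k.choose (r + 1) * m ^ (r + 1) + k.choose r * m ^ r * a
      = (k + 1).choose (r + 1) * (m ^ r * b) := by
        rw [hb_def]
        field_simp
        linear_combination m ^ (r + 1) * h₁ + a * m ^ r * h₂
    _ ≤ (k + 1).choose (r + 1) * ((r * m + b) / (r + 1)) ^ (r + 1) := by
        gcongr
        exact pow_mul_le_mean_pow hm hb r
    _ = (k + 1).choose (r + 1) * ((k * m + a) / (k + 1)) ^ (r + 1) := by
        rw [hb_def]
        congr 2
        field_simp
        ring

section SymmetricSums

variable {ι : Type*} [DecidableEq ι]

theorem sum_powersetCard_succ_insert_prod {R : Type*} [CommSemiring R] {j : ι} {t : Finset ι}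
    (hj : j ∉ t) (a : ι → R) (r : ℕ) :
    ∑ I ∈ (insert j t).powersetCard (r + 1), ∏ i ∈ I, a i =
      ∑ I ∈ t.powersetCard (r + 1), ∏ i ∈ I, a i + a j * ∑ I ∈ t.powersetCard r, ∏ i ∈ I, a i := by
  have hj_notMem {r : ℕ} {I : Finset ι} (hI : I ∈ t.powersetCard r) : j ∉ I :=
    fun h => hj ((mem_powersetCard.1 hI).1 h)
  have hdisj : Disjoint (t.powersetCard (r + 1)) ((t.powersetCard r).image (insert j)) := by
    refine disjoint_left.2 fun I hI hI' => ?_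
    obtain ⟨J, -, rfl⟩ := mem_image.1 hI'
    exact hj_notMem hI (mem_insert_self j J)
  have hinj : Set.InjOn (insert j) (t.powersetCard r : Set (Finset ι)) :=
    fun I hI J hJ h => by
      rw [← erase_insert (hj_notMem hI), ← erase_insert (hj_notMem hJ), h]
  rw [powersetCard_succ_insert hj, sum_union hdisj, sum_image hinj, mul_sum]
  exact congrArg _ (sum_congr rfl fun I hI => prod_insert (hj_notMem hI))

theorem sum_powersetCard_prod_le (s : Finset ι) {a : ι → ℝ} (ha : ∀ i ∈ s, 0 ≤ a i) (r : ℕ) :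
    ∑ I ∈ s.powersetCard r, ∏ i ∈ I, a i ≤ (#s).choose r * ((∑ i ∈ s, a i) / #s) ^ r := by
  induction s using Finset.induction_on generalizing r with
  | empty =>
    rcases r with _ | r
    · simp
    · simp [powersetCard_eq_empty.2 (by simp : #(∅ : Finset ι) < r + 1)]
  | @insert j t hj ih =>
    rcases r with _ | r
    · simp
    have ht : ∀ i ∈ t, 0 ≤ a i := fun i hi => ha i (mem_insert_of_mem hi)
    have haj : 0 ≤ a j := ha j (mem_insert_self j t)
    have hmean : (#t : ℝ) * ((∑ i ∈ t, a i) / #t) = ∑ i ∈ t, a i := by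
      rcases t.eq_empty_or_nonempty with rfl | hne
      · simp
      · exact mul_div_cancel₀ _ (by exact_mod_cast hne.card_pos.ne')
    calc ∑ I ∈ (insert j t).powersetCard (r + 1), ∏ i ∈ I, a i
        = ∑ I ∈ t.powersetCard (r + 1), ∏ i ∈ I, a i
            + a j * ∑ I ∈ t.powersetCard r, ∏ i ∈ I, a i :=
          sum_powersetCard_succ_insert_prod hj a r
      _ ≤ (#t).choose (r + 1) * ((∑ i ∈ t, a i) / #t) ^ (r + 1)
            + (#t).choose r * ((∑ i ∈ t, a i) / #t) ^ r * a j := by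
          rw [mul_comm (a j)]
          exact add_le_add (ih ht (r + 1)) (mul_le_mul_of_nonneg_right (ih ht r) haj)
      _ ≤ (#t + 1).choose (r + 1) * ((#t * ((∑ i ∈ t, a i) / #t) + a j) / (#t + 1)) ^ (r + 1) :=
          choose_mul_pow_add_le (div_nonneg (sum_nonneg ht) (Nat.cast_nonneg _)) haj _ _
      _ = (#(insert j t)).choose (r + 1) * ((∑ i ∈ insert j t, a i) / #(insert j t)) ^ (r + 1) := by
          rw [hmean, card_insert_of_notMem hj, sum_insert hj, add_comm (a j)]
          push_cast
          rfl

theorem prod_powersetCard_prod {M : Type*} [CommMonoid M] (s : Finset ι) (a : ι → M) (r : ℕ) :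
    ∏ I ∈ s.powersetCard (r + 1), ∏ i ∈ I, a i = ∏ i ∈ s, a i ^ (#s - 1).choose r := by
  rw [prod_comm' (t' := s) (s' := fun i => {I ∈ s.powersetCard (r + 1) | i ∈ I})]
  · refine prod_congr rfl fun i hi => ?_
    rw [prod_const]
    congr 1
    simpa [singleton_subset_iff] using
      card_filter_powersetCard_subset {i} s (r + 1) (singleton_subset_iff.2 hi) (by simp)
  · intro I i
    rw [mem_filter]
    exact ⟨fun h => ⟨h, (mem_powersetCard.1 h.1).1 h.2⟩, And.left⟩

theorem choose_mul_geomMean_pow_le (s : Finset ι) {a : ι → ℝ} (ha : ∀ i ∈ s, 0 ≤ a i) (r : ℕ) :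
    (#s).choose r * ((∏ i ∈ s, a i) ^ (#s : ℝ)⁻¹) ^ r ≤ ∑ I ∈ s.powersetCard r, ∏ i ∈ I, a i := by
  have hP : ∀ I ∈ s.powersetCard r, 0 ≤ ∏ i ∈ I, a i :=
    fun I hI => prod_nonneg fun i hi => ha i ((mem_powersetCard.1 hI).1 hi)
  rcases r with _ | r
  · simp
  rcases lt_or_ge #s (r + 1) with hlt | hle
  · rw [Nat.choose_eq_zero_of_lt hlt, Nat.cast_zero, zero_mul]
    exact sum_nonneg hP
  have hN : (0 : ℝ) < (#s).choose (r + 1) := Nat.cast_pos.2 (Nat.choose_pos hle)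
  have hG : 0 ≤ ∏ i ∈ s, a i := prod_nonneg ha
  have amgm := Real.geom_mean_le_arith_mean (s.powersetCard (r + 1)) (fun _ => 1)
    (fun I => ∏ i ∈ I, a i) (fun _ _ => zero_le_one) (by simpa using hN) hP
  simp only [Real.rpow_one, one_mul, sum_const, card_powersetCard, nsmul_eq_mul, mul_one,
    prod_powersetCard_prod, prod_pow] at amgm
  -- each `i ∈ s` lies in `C(#s - 1, r)` of the `C(#s, r + 1)` subsets, a fraction `(r + 1) / #s`
  have hcount : ((#s - 1).choose r : ℝ) * ((#s).choose (r + 1) : ℝ)⁻¹ =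
      (#s : ℝ)⁻¹ * ((r + 1 : ℕ) : ℝ) := by
    have := Nat.add_one_mul_choose_eq (#s - 1) r
    rw [Nat.sub_add_cancel (by omega)] at this
    have hs : (0 : ℝ) < #s := by exact_mod_cast (by omega : 0 < #s)
    field_simp
    exact_mod_cast (mul_comm _ _).trans this
  rw [← Real.rpow_natCast, ← Real.rpow_mul hG, hcount, Real.rpow_mul_natCast hG,
    le_div_iff₀ hN] at amgm
  linarith

end SymmetricSums

theorem stmt6_general (n : ℕ) (hn : 1 ≤ n) (q : Fin n → ℕ) (hq : ∀ i, 2 ≤ q i)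
    (r : ℕ) :
    (n.choose r : ℝ) * ((∏ i : Fin n, ((q i : ℝ) - 1)) ^ ((n : ℝ)⁻¹)) ^ r ≤ sph q r
      ∧ (sph q r : ℝ) ≤ (n.choose r : ℝ) * ((∑ i : Fin n, (q i : ℝ)) / n - 1) ^ r := by
  have hq₁ (i : Fin n) : 1 ≤ q i := one_le_two.trans (hq i)
  have : ∀ i, NeZero (q i) := fun i => NeZero.of_pos (hq₁ i)
  have hnonneg : ∀ i ∈ univ, (0 : ℝ) ≤ q i - 1 := fun i _ => by simpa using hq₁ i
  have hsph : (sph q r : ℝ) = ∑ I ∈ univ.powersetCard r, ∏ i ∈ I, ((q i : ℝ) - 1) := by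
    simp [sph_eq_sum_prod, Nat.cast_sub (hq₁ _)]
  have hmean : (∑ i, (q i : ℝ)) / n - 1 = (∑ i, ((q i : ℝ) - 1)) / n := by
    have : (n : ℝ) ≠ 0 := Nat.cast_ne_zero.2 (Nat.one_le_iff_ne_zero.1 hn)
    rw [sum_sub_distrib]
    field_simp
    simp
  rw [hsph, hmean]
  have lower := choose_mul_geomMean_pow_le univ hnonneg r
  have upper := sum_powersetCard_prod_le univ hnonneg r
  rw [card_univ, Fintype.card_fin] at lower upper
  exact ⟨lower, upper⟩

/-- For `0 ≤ r ≤ n`, `C(n,r) (q̂_mg - 1)^r ≤ s_r ≤ C(n,r) (q̂_a - 1)^r`, where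
`q̂_mg - 1 = (∏ (q_i - 1))^{1/n}` is the geometric mean of the `q_i - 1`, and
`q̂_a - 1 = (1/n) ∑ q_i - 1`. -/
theorem stmt6 (n : ℕ) (hn : 1 ≤ n) (q : Fin n → ℕ) (hq : ∀ i, 2 ≤ q i)
    (r : ℕ) (hr : r ≤ n) :
    (n.choose r : ℝ) * ((∏ i : Fin n, ((q i : ℝ) - 1)) ^ ((n : ℝ)⁻¹)) ^ r ≤ sph q r
      ∧ (sph q r : ℝ) ≤ (n.choose r : ℝ) * ((∑ i : Fin n, (q i : ℝ)) / n - 1) ^ r :=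
  stmt6_general n hn q hq r
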